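/- arXiv:2507.13024 — 2 statements merged into one kernel-verified Lean document; each statement's English description precedes it below -/
import Mathlib

section
/- Let (Ω, F, P) be a probability space, V : Ω → ℝ^k a measurable random vector (the observed covariates on a missingness pattern), ξ : Ω → ℝ^l a random vector independent of V, C an l×k real matrix and d₀ ∈ ℝ^l, and define X_mis := C·V + d₀ + ξ (the missing covariates). Let β₀ ∈ ℝ, β_obs ∈ ℝ^k, β_mis ∈ ℝ^l, and suppose the real random variable ⟨β_mis, ξ⟩ is Gaussian with mean 0 and variance σ̃² > 0. Then, P-almost surely, the conditional expectation of Φ(β₀ + ⟨β_obs, V⟩ + ⟨β_mis, X_mis⟩) given the σ-algebra generated by V equals Φ((α₀ + ⟨α, V⟩)/√(1 + σ̃²)), where α₀ = β₀ + ⟨β_mis, d₀⟩ and α = β_obs + Cᵀβ_mis. -/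
open MeasureTheory ProbabilityTheory Real Matrix
open scoped NNReal

/-- The standard normal CDF `Φ(t) = (2π)^{-1/2} ∫_{-∞}^t e^{-s²/2} ds`. -/
noncomputable def stdNormalCDF (t : ℝ) : ℝ :=
  ∫ s in Set.Iic t, Real.exp (-s ^ 2 / 2) / Real.sqrt (2 * Real.pi)

/-!
Substituting `X_mis = C V + d₀ + ξ`, the linear predictor is `α₀ + ⟨α, V⟩ + W` with
`W = ⟨β_mis, ξ⟩ ~ N(0, σ̃²)` independent of `V`, so conditioning on `V` amounts to integrating
`w ↦ Φ(a + w)` against `N(0, σ̃²)` at `a = α₀ + ⟨α, V⟩`. For `Z ~ N(0, 1)` independent of `W`,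
`E Φ(a + W) = P(Z ≤ a + W) = P(Z - W ≤ a)`, and `Z - W ~ N(0, 1 + σ̃²)` gives `Φ(a / √(1 + σ̃²))`.
-/

open Set

lemma stdNormalCDF_eq_cdf : stdNormalCDF = cdf (gaussianReal 0 1) := by
  ext t
  rw [cdf_eq_real, measureReal_def, gaussianReal_apply_eq_integral 0 one_ne_zero,
    ENNReal.toReal_ofReal (integral_nonneg fun s => gaussianPDFReal_nonneg 0 1 s)]
  refine setIntegral_congr_fun measurableSet_Iic fun s _ => ?_
  simp [gaussianPDFReal, div_eq_inv_mul, mul_comm]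

lemma measurable_stdNormalCDF : Measurable stdNormalCDF :=
  stdNormalCDF_eq_cdf ▸ (cdf _).mono.measurable

lemma norm_stdNormalCDF_le_one (t : ℝ) : ‖stdNormalCDF t‖ ≤ 1 := by
  rw [stdNormalCDF_eq_cdf, norm_of_nonneg (cdf_nonneg _ _)]
  exact cdf_le_one _ _

lemma MeasureTheory.Measure.conv_apply_Iic (μ ν : Measure ℝ) [SFinite ν] (a : ℝ) :
    (μ ∗ ν) (Iic a) = ∫⁻ x, ν (Iic (a - x)) ∂μ := by
  rw [← lintegral_indicator_one measurableSet_Iic,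
    Measure.lintegral_conv (measurable_one.indicator measurableSet_Iic)]
  refine lintegral_congr fun x => ?_
  rw [← lintegral_indicator_one measurableSet_Iic]
  refine lintegral_congr fun y => ?_
  simp only [indicator, mem_Iic, le_sub_iff_add_le', Pi.one_apply]

lemma gaussianReal_zero_apply_Iic {v : ℝ≥0} (hv : v ≠ 0) (a : ℝ) :
    gaussianReal 0 v (Iic a) = gaussianReal 0 1 (Iic (a / √v)) := by
  have hmap : (gaussianReal 0 1).map (· * √v) = gaussianReal 0 v := by
    rw [gaussianReal_map_mul_const, mul_zero, mul_one]
    congr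
    exact Real.sq_sqrt v.2
  rw [← hmap, Measure.map_apply (measurable_mul_const _) measurableSet_Iic]
  congr 1
  ext x
  simp [le_div_iff₀ (show 0 < √(v : ℝ) by positivity)]

lemma lintegral_gaussianReal_Iic_add (v : ℝ≥0) (a : ℝ) :
    ∫⁻ w, gaussianReal 0 1 (Iic (a + w)) ∂gaussianReal 0 v
      = gaussianReal 0 1 (Iic (a / √(1 + v))) := by
  calc ∫⁻ w, gaussianReal 0 1 (Iic (a + w)) ∂gaussianReal 0 v
      = ∫⁻ w, gaussianReal 0 1 (Iic (a - w))
          ∂(gaussianReal 0 v).map (MeasurableEquiv.neg ℝ) := by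
        rw [lintegral_map_equiv]
        simp [sub_eq_add_neg]
    _ = (gaussianReal 0 v ∗ gaussianReal 0 1) (Iic a) := by
        rw [Measure.conv_apply_Iic]
        congr
        simpa using gaussianReal_map_neg (μ := 0) (v := v)
    _ = gaussianReal 0 1 (Iic (a / √(1 + v))) := by
        rw [gaussianReal_conv_gaussianReal, zero_add, add_comm v,
          gaussianReal_zero_apply_Iic (by positivity)]
        simp

lemma integral_stdNormalCDF_add_gaussianReal (v : ℝ≥0) (a : ℝ) :
    ∫ w, stdNormalCDF (a + w) ∂gaussianReal 0 v = stdNormalCDF (a / √(1 + v)) := by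
  have hmono : Monotone fun w => gaussianReal 0 1 (Iic (a + w)) := fun _ _ h =>
    measure_mono (Iic_subset_Iic.2 (by linarith))
  simp only [stdNormalCDF_eq_cdf, cdf_eq_real, measureReal_def]
  rw [integral_toReal hmono.measurable.aemeasurable (ae_of_all _ fun _ => measure_lt_top _ _),
    lintegral_gaussianReal_Iic_add]

lemma ProbabilityTheory.IndepFun.condDistrib_ae_eq_const {Ω β γ : Type*} [MeasurableSpace Ω]
    [MeasurableSpace β] [MeasurableSpace γ] [StandardBorelSpace γ] [Nonempty γ]
    {μ : Measure Ω} [IsFiniteMeasure μ] {X : Ω → β} {Y : Ω → γ}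
    (hXY : IndepFun X Y μ) (hX : Measurable X) (hY : Measurable Y) :
    condDistrib Y X μ =ᵐ[μ.map X] Kernel.const β (μ.map Y) := by
  rw [condDistrib_ae_eq_iff_measure_eq_compProd X hY.aemeasurable, Measure.compProd_const]
  exact (indepFun_iff_map_prod_eq_prod_map_map hX.aemeasurable hY.aemeasurable).mp hXY

lemma ProbabilityTheory.IndepFun.condExp_comp_prodMk_ae_eq {Ω β γ F : Type*}
    [MeasurableSpace Ω] {mβ : MeasurableSpace β} [MeasurableSpace γ] [StandardBorelSpace γ]
    [Nonempty γ] [NormedAddCommGroup F] [NormedSpace ℝ F] [CompleteSpace F]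
    {μ : Measure Ω} [IsFiniteMeasure μ] {X : Ω → β} {Y : Ω → γ}
    (hXY : IndepFun X Y μ) (hX : Measurable X) (hY : Measurable Y)
    {f : β × γ → F} (hf : StronglyMeasurable f) (hf_int : Integrable (fun ω => f (X ω, Y ω)) μ) :
    μ[fun ω => f (X ω, Y ω) | mβ.comap X] =ᵐ[μ] fun ω => ∫ y, f (X ω, y) ∂(μ.map Y) := by
  filter_upwards [condExp_prod_ae_eq_integral_condDistrib hX hY.aemeasurable hf hf_int,
    ae_of_ae_map hX.aemeasurable (hXY.condDistrib_ae_eq_const hX hY)] with ω hω hconst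
  rw [hω, hconst, Kernel.const_apply]

theorem probit_pattern_by_pattern_general {Ω : Type*} [MeasurableSpace Ω]
    (P : Measure Ω) [IsProbabilityMeasure P] (k l : ℕ)
    (V : Ω → (Fin k → ℝ)) (hV : Measurable V)
    (ξ : Ω → (Fin l → ℝ)) (hξ : Measurable ξ)
    (hindep : IndepFun V ξ P)
    (C : Matrix (Fin l) (Fin k) ℝ) (d₀ : Fin l → ℝ)
    (Xmis : Ω → (Fin l → ℝ)) (hXmis : ∀ ω, Xmis ω = C.mulVec (V ω) + d₀ + ξ ω)
    (β₀ : ℝ) (βobs : Fin k → ℝ) (βmis : Fin l → ℝ)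
    (σt2 : ℝ≥0)
    (hgauss : P.map (fun ω => βmis ⬝ᵥ ξ ω) = gaussianReal 0 σt2) :
    ∀ᵐ ω ∂P,
      (P[fun ω => stdNormalCDF (β₀ + βobs ⬝ᵥ V ω + βmis ⬝ᵥ Xmis ω) |
          MeasurableSpace.comap V inferInstance]) ω =
        stdNormalCDF (((β₀ + βmis ⬝ᵥ d₀) + (βobs + C.transpose.mulVec βmis) ⬝ᵥ V ω) /
          Real.sqrt (1 + (σt2 : ℝ))) := by
  set α₀ := β₀ + βmis ⬝ᵥ d₀
  set α := βobs + C.transpose.mulVec βmis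
  set W : Ω → ℝ := fun ω => βmis ⬝ᵥ ξ ω
  set f : (Fin k → ℝ) × ℝ → ℝ := fun p => stdNormalCDF (α₀ + α ⬝ᵥ p.1 + p.2)
  have hf : Measurable f := measurable_stdNormalCDF.comp (by fun_prop)
  have hlinear : (fun ω => stdNormalCDF (β₀ + βobs ⬝ᵥ V ω + βmis ⬝ᵥ Xmis ω))
      = fun ω => f (V ω, W ω) := by
    ext ω
    simp only [f, W, α₀, α, hXmis, dotProduct_add, add_dotProduct, dotProduct_mulVec,
      mulVec_transpose]
    congr 1
    ring
  have hindepW : IndepFun V W P :=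
    hindep.comp measurable_id (show Measurable (βmis ⬝ᵥ ·) by fun_prop)
  have hint : Integrable (fun ω => f (V ω, W ω)) P :=
    .of_bound (hf.comp (hV.prodMk (by fun_prop))).aestronglyMeasurable 1
      (ae_of_all _ fun _ => norm_stdNormalCDF_le_one _)
  filter_upwards [hindepW.condExp_comp_prodMk_ae_eq hV (by fun_prop) hf.stronglyMeasurable hint]
    with ω hω
  rw [hlinear, hω, hgauss]
  exact integral_stdNormalCDF_add_gaussianReal σt2 (α₀ + α ⬝ᵥ V ω)

/-- Theorem 1 of the paper in regression-residual form: if the missing covariates satisfy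
`X_mis = C V + d₀ + ξ` with `ξ` independent of the observed covariates `V` and
`⟨β_mis, ξ⟩ ~ N(0, σ̃²)`, `σ̃² > 0`, then a.s.
`E[Φ(β₀ + ⟨β_obs, V⟩ + ⟨β_mis, X_mis⟩) | σ(V)] = Φ((α₀ + ⟨α, V⟩)/√(1 + σ̃²))`,
where `α₀ = β₀ + ⟨β_mis, d₀⟩` and `α = β_obs + Cᵀ β_mis`. -/
theorem probit_pattern_by_pattern {Ω : Type*} [MeasurableSpace Ω]
    (P : Measure Ω) [IsProbabilityMeasure P] (k l : ℕ)
    (V : Ω → (Fin k → ℝ)) (hV : Measurable V)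
    (ξ : Ω → (Fin l → ℝ)) (hξ : Measurable ξ)
    (hindep : IndepFun V ξ P)
    (C : Matrix (Fin l) (Fin k) ℝ) (d₀ : Fin l → ℝ)
    (Xmis : Ω → (Fin l → ℝ)) (hXmis : ∀ ω, Xmis ω = C.mulVec (V ω) + d₀ + ξ ω)
    (β₀ : ℝ) (βobs : Fin k → ℝ) (βmis : Fin l → ℝ)
    (σt2 : ℝ≥0) (hσt2 : 0 < σt2)
    (hgauss : P.map (fun ω => βmis ⬝ᵥ ξ ω) = gaussianReal 0 σt2) :
    ∀ᵐ ω ∂P,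
      (P[fun ω => stdNormalCDF (β₀ + βobs ⬝ᵥ V ω + βmis ⬝ᵥ Xmis ω) |
          MeasurableSpace.comap V inferInstance]) ω =
        stdNormalCDF (((β₀ + βmis ⬝ᵥ d₀) + (βobs + C.transpose.mulVec βmis) ⬝ᵥ V ω) /
          Real.sqrt (1 + (σt2 : ℝ))) :=
  probit_pattern_by_pattern_general P k l V hV ξ hξ hindep C d₀ Xmis hXmis β₀ βobs βmis σt2 hgauss
end

section
/- Let J be a finite index set and let (X_j)_{j∈J} be independent real random variables with X_j Gaussian with mean μ_j and variance σ_j² ≥ 0. Then for all u ∈ ℝ and all reals (β_j)_{j∈J}, E[Φ(u + Σ_{j∈J} β_j X_j)] = Φ((u + Σ_{j∈J} β_j μ_j)/√(1 + Σ_{j∈J} β_j² σ_j²)). -/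
open MeasureTheory ProbabilityTheory Real
open scoped NNReal

lemma stdNormalCDF_eq_measureReal_Iic (t : ℝ) :
    stdNormalCDF t = (gaussianReal 0 1).real (Set.Iic t) := by
  rw [measureReal_def, gaussianReal_apply_eq_integral 0 one_ne_zero,
    ENNReal.toReal_ofReal (setIntegral_nonneg measurableSet_Iic fun s _ ↦
      gaussianPDFReal_nonneg 0 1 s), stdNormalCDF]
  congr 1 with s
  simp [gaussianPDFReal, div_eq_inv_mul]

lemma monotone_stdNormalCDF : Monotone stdNormalCDF := fun a b hab ↦ by
  simp only [stdNormalCDF_eq_measureReal_Iic]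
  exact measureReal_mono (Set.Iic_subset_Iic.mpr hab)

lemma gaussianReal_map_standardize (m : ℝ) {v : ℝ≥0} (hv : v ≠ 0) :
    (gaussianReal m v).map (fun x ↦ (x - m) / √v) = gaussianReal 0 1 := by
  have hcomp : (fun x ↦ (x - m) / √v) = (· / √(v : ℝ)) ∘ (· - m) := rfl
  rw [hcomp, ← Measure.map_map (by fun_prop) (by fun_prop), gaussianReal_map_sub_const,
    gaussianReal_map_div_const, sub_self, zero_div]
  congr 1
  ext
  simp [Real.sq_sqrt v.coe_nonneg, hv]

lemma measureReal_gaussianReal_Iic (m : ℝ) {v : ℝ≥0} (hv : v ≠ 0) (x : ℝ) :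
    (gaussianReal m v).real (Set.Iic x) = stdNormalCDF ((x - m) / √v) := by
  have hsqrt : 0 < √(v : ℝ) := Real.sqrt_pos.mpr (NNReal.coe_pos.mpr (pos_iff_ne_zero.mpr hv))
  rw [stdNormalCDF_eq_measureReal_Iic, ← gaussianReal_map_standardize m hv,
    map_measureReal_apply (by fun_prop) measurableSet_Iic]
  congr 1 with y
  simp [div_le_div_iff_of_pos_right hsqrt]

lemma conv_map_neg_apply_Iic (μ ν : Measure ℝ) [SFinite μ] [SFinite ν] (u : ℝ) :
    (μ ∗ ν.map (fun y ↦ -y)) (Set.Iic u) = ∫⁻ y, μ (Set.Iic (u + y)) ∂ν := by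
  have hs : MeasurableSet ((fun p : ℝ × ℝ ↦ p.1 + p.2) ⁻¹' Set.Iic u) :=
    measurable_add measurableSet_Iic
  rw [Measure.conv, Measure.map_apply measurable_add measurableSet_Iic,
    Measure.prod_apply_symm hs, lintegral_map (measurable_measure_prodMk_right hs) measurable_neg]
  congr with y
  congr 1 with x
  simp [← sub_eq_add_neg]

lemma integral_stdNormalCDF_const_add_gaussianReal (m : ℝ) (v : ℝ≥0) (u : ℝ) :
    ∫ y, stdNormalCDF (u + y) ∂(gaussianReal m v) = stdNormalCDF ((u + m) / √(1 + v)) := by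
  have hmono : Monotone fun y ↦ gaussianReal 0 1 (Set.Iic (u + y)) := fun a b hab ↦
    measure_mono (Set.Iic_subset_Iic.mpr (by linarith))
  calc ∫ y, stdNormalCDF (u + y) ∂(gaussianReal m v)
      = (∫⁻ y, gaussianReal 0 1 (Set.Iic (u + y)) ∂(gaussianReal m v)).toReal := by
        simp only [stdNormalCDF_eq_measureReal_Iic, measureReal_def]
        exact integral_toReal hmono.measurable.aemeasurable
          (ae_of_all _ fun _ ↦ measure_lt_top _ _)
    _ = (gaussianReal (-m) (1 + v)).real (Set.Iic u) := by
        rw [← conv_map_neg_apply_Iic, gaussianReal_map_neg, gaussianReal_conv_gaussianReal,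
          zero_add, measureReal_def]
    _ = stdNormalCDF ((u + m) / √(1 + v)) := by
        rw [measureReal_gaussianReal_Iic _ (by simp), sub_neg_eq_add, NNReal.coe_add,
          NNReal.coe_one]

lemma ProbabilityTheory.iIndepFun.map_finsetSum_eq_gaussianReal {Ω ι : Type*}
    [MeasurableSpace Ω] {P : Measure Ω} [IsProbabilityMeasure P] {X : ι → Ω → ℝ}
    (hX : ∀ i, AEMeasurable (X i) P)
    (hindep : iIndepFun X P) {m : ι → ℝ} {v : ι → ℝ≥0}
    (hlaw : ∀ i, P.map (X i) = gaussianReal (m i) (v i)) (s : Finset ι) :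
    P.map (∑ i ∈ s, X i) = gaussianReal (∑ i ∈ s, m i) (∑ i ∈ s, v i) := by
  classical
  induction s using Finset.induction_on with
  | empty => simp [gaussianReal_zero_var, Pi.zero_def, Measure.map_const]
  | insert k s hk ih =>
    simp only [Finset.sum_insert hk]
    exact gaussianReal_add_gaussianReal_of_indepFun
      (hindep.indepFun_finsetSum_of_notMem₀ hX hk).symm (hlaw k) ih

/-- Independent-covariates specialization of Theorem 1: if `(X_j)_{j∈J}` are independent
with `X_j ~ N(μ_j, σ_j²)`, then for all `u` and `(β_j)`,
`E[Φ(u + Σ_j β_j X_j)] = Φ((u + Σ_j β_j μ_j)/√(1 + Σ_j β_j² σ_j²))`. -/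
theorem probit_indep_gaussian_expectation {Ω : Type*} [MeasurableSpace Ω]
    (P : Measure Ω) [IsProbabilityMeasure P]
    {J : Type*} [Fintype J]
    (X : J → Ω → ℝ) (hX : ∀ j, Measurable (X j))
    (hindep : iIndepFun X P)
    (μ : J → ℝ) (v : J → ℝ≥0)
    (hdist : ∀ j, P.map (X j) = gaussianReal (μ j) (v j))
    (u : ℝ) (β : J → ℝ) :
    ∫ ω, stdNormalCDF (u + ∑ j, β j * X j ω) ∂P =
      stdNormalCDF ((u + ∑ j, β j * μ j) /
        Real.sqrt (1 + ∑ j, (β j) ^ 2 * ((v j : ℝ)))) := by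
  let Y : J → Ω → ℝ := fun j ω ↦ β j * X j ω
  have hY : ∀ j, AEMeasurable (Y j) P := fun j ↦ (hX j).aemeasurable.const_mul (β j)
  have hlawY : ∀ j, P.map (Y j) = gaussianReal (β j * μ j) (⟨β j ^ 2, sq_nonneg _⟩ * v j) :=
    fun j ↦ (gaussianReal_const_mul ⟨(hX j).aemeasurable, hdist j⟩ (β j)).map_eq
  have hindepY : iIndepFun Y P := hindep.comp _ fun j ↦ measurable_const_mul (β j)
  have hlawSum := hindepY.map_finsetSum_eq_gaussianReal hY hlawY Finset.univ
  have hSum : (∑ j, Y j) = fun ω ↦ ∑ j, β j * X j ω := by ext; simp [Y]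
  rw [hSum] at hlawSum
  rw [← integral_map (f := fun y ↦ stdNormalCDF (u + y)) (by fun_prop)
    (monotone_stdNormalCDF.measurable.comp (measurable_const_add u)).aestronglyMeasurable,
    hlawSum, integral_stdNormalCDF_const_add_gaussianReal, NNReal.coe_sum]
  rfl
end
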